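/- Let π = [π_0, π_1, …, π_{n+1}] be a permutation with π_1 = 1 and let 2 ≤ i < j ≤ n+1 be indices such that |π_{i−1} − π_{j−1}| = 1, |π_i − π_{i−1}| ≠ 1, and |π_j − π_{j−1}| ≠ 1. Then the prefix transreversal βτ(1,i,j) removes at least one breakpoint, i.e., b(π·βτ(1,i,j)) ≤ b(π) − 1. -/

import Mathlib

/-!
Write the tail `π₁ … π_{n+1}` as `B ++ A ++ C` with `B = π₁ … π_{i−1}`, `A = π_i … π_{j−1}` and
`C = π_j … π_{n+1}`; then `βτ(1,i,j)` turns it into `A ++ Bᴿ ++ C`. Reversal does not change the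
breakpoints inside a block, so only the junctions differ: the old junctions `(π_{i−1}, π_i)` and
`(π_{j−1}, π_j)` are both breakpoints, while of the new ones `(π_{j−1}, π_{i−1})` is an adjacency
and `(π₁, π_j)` costs at most one.
-/

/-- A permutation on `n` elements: a list `[π₀, π₁, …, π_{n+1}]` of distinct
naturals that is a rearrangement of `0, 1, …, n+1` with `π₀ = 0` and
`π_{n+1} = n+1`. -/
def IsPerm (n : ℕ) (π : List ℕ) : Prop :=
  π.Perm (List.range (n + 2)) ∧ π.getD 0 0 = 0 ∧ π.getD (n + 1) 0 = n + 1

/-- Breakpoint count `b(π)`: `1` plus the number of indices `i` with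
`2 ≤ i ≤ n+1` and `|π_i − π_{i−1}| ≠ 1` (these are exactly the consecutive
pairs of the tail `π₁, …, π_{n+1}`). -/
def bp (π : List ℕ) : ℕ :=
  1 + ((π.drop 1).zip (π.drop 2)).countP
        (fun p => !(p.1 + 1 == p.2 || p.2 + 1 == p.1))

/-- Redefined breakpoint count `b′(π)`: the number of indices `i` with
`1 ≤ i ≤ n+1` and `|π_i − π_{i−1}| ≠ 1`. -/
def bp' (π : List ℕ) : ℕ :=
  (π.zip (π.drop 1)).countP
    (fun p => !(p.1 + 1 == p.2 || p.2 + 1 == p.1))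

/-- Prefix reversal `β(1,j)`: `[π₀, π_{j−1}, …, π₁, π_j, …, π_{n+1}]`. -/
def prefixReversal (π : List ℕ) (j : ℕ) : List ℕ :=
  π.take 1 ++ ((π.drop 1).take (j - 1)).reverse ++ π.drop j

/-- Prefix transposition `τ(1,j,k)`:
`[π₀, π_j, …, π_{k−1}, π₁, …, π_{j−1}, π_k, …, π_{n+1}]`. -/
def prefixTransposition (π : List ℕ) (j k : ℕ) : List ℕ :=
  π.take 1 ++ (π.drop j).take (k - j) ++ (π.drop 1).take (j - 1) ++ π.drop k

/-- Prefix transreversal `βτ(1,j,k)`: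
`[π₀, π_j, …, π_{k−1}, π_{j−1}, …, π₁, π_k, …, π_{n+1}]`. -/
def prefixTransreversal (π : List ℕ) (j k : ℕ) : List ℕ :=
  π.take 1 ++ (π.drop j).take (k - j) ++ ((π.drop 1).take (j - 1)).reverse ++ π.drop k

/-- A prefix operation: a prefix reversal, a prefix transposition, or a
prefix transreversal. -/
inductive PrefOp
  | rev (j : ℕ)
  | trans (j k : ℕ)
  | transrev (j k : ℕ)

/-- Apply a prefix operation to a permutation. -/
def PrefOp.apply (π : List ℕ) : PrefOp → List ℕ
  | .rev j => prefixReversal π j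
  | .trans j k => prefixTransposition π j k
  | .transrev j k => prefixTransreversal π j k

/-- Validity of a prefix operation on a permutation of `n` elements:
`3 ≤ j ≤ n+1` for a prefix reversal, `2 ≤ j < k ≤ n+1` for a prefix
transposition or a prefix transreversal. -/
def PrefOp.Valid (n : ℕ) : PrefOp → Prop
  | .rev j => 3 ≤ j ∧ j ≤ n + 1
  | .trans j k => 2 ≤ j ∧ j < k ∧ k ≤ n + 1
  | .transrev j k => 2 ≤ j ∧ j < k ∧ k ≤ n + 1

/-- Is the operation a prefix reversal? -/
def PrefOp.isRev : PrefOp → Bool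
  | .rev _ => true
  | _ => false

/-- Is the operation a prefix transreversal? -/
def PrefOp.isTransrev : PrefOp → Bool
  | .transrev _ _ => true
  | _ => false

/-- Apply a sequence of prefix operations, left to right. -/
def applySeq : List ℕ → List PrefOp → List ℕ
  | π, [] => π
  | π, o :: os => applySeq (o.apply π) os

/-- All operations in the sequence are valid for permutations of `n` elements. -/
def ValidSeq (n : ℕ) (ops : List PrefOp) : Prop :=
  ∀ o ∈ ops, o.Valid n

/-- `fm π` is `m(π) + 1`, where `m(π)` is the largest index `m` such that
`π_i = i` for all `0 ≤ i ≤ m`; i.e. the length of the longest already-sorted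
prefix of `π`. -/
def fm (π : List ℕ) : ℕ :=
  ((List.range π.length).takeWhile (fun i => π.getD i 0 == i)).length

/-- Forward-march prefix reversal: reverses the segment
`π_{m(π)+1}, …, π_{j−1}` in place. -/
def fmPrefixReversal (π : List ℕ) (j : ℕ) : List ℕ :=
  π.take (fm π) ++ ((π.drop (fm π)).take (j - fm π)).reverse ++ π.drop j

/-- Forward-march prefix transposition: cuts the segment
`π_{m(π)+1}, …, π_{j−1}` and pastes it between `π_{k−1}` and `π_k`. -/
def fmPrefixTransposition (π : List ℕ) (j k : ℕ) : List ℕ :=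
  π.take (fm π) ++ (π.drop j).take (k - j) ++
    (π.drop (fm π)).take (j - fm π) ++ π.drop k

/-- A forward-march operation: an FM prefix reversal or an FM prefix
transposition. -/
inductive FMOp
  | rev (j : ℕ)
  | trans (j k : ℕ)

/-- Apply a forward-march operation. -/
def FMOp.apply (π : List ℕ) : FMOp → List ℕ
  | .rev j => fmPrefixReversal π j
  | .trans j k => fmPrefixTransposition π j k

/-- Validity of a forward-march operation on a permutation `π` of `n`
elements: `m(π)+3 ≤ j ≤ n+1` for an FM prefix reversal, and
`m(π)+2 ≤ j ≤ n`, `j < k ≤ n+1` for an FM prefix transposition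
(recall `fm π = m(π) + 1`). -/
def FMOp.Valid (n : ℕ) (π : List ℕ) : FMOp → Prop
  | .rev j => fm π + 2 ≤ j ∧ j ≤ n + 1
  | .trans j k => fm π + 1 ≤ j ∧ j ≤ n ∧ j < k ∧ k ≤ n + 1

/-- Is the forward-march operation an FM prefix reversal? -/
def FMOp.isRev : FMOp → Bool
  | .rev _ => true
  | _ => false

/-- Apply a sequence of forward-march operations, left to right. -/
def applyFMSeq : List ℕ → List FMOp → List ℕ
  | π, [] => π
  | π, o :: os => applyFMSeq (o.apply π) os

/-- Validity of a sequence of forward-march operations, where each operation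
must be valid for the permutation obtained after applying the previous ones. -/
def FMValidSeq (n : ℕ) : List ℕ → List FMOp → Prop
  | _, [] => True
  | π, o :: os => o.Valid n π ∧ FMValidSeq n (o.apply π) os

def bpInd (a b : ℕ) : ℕ := if a + 1 = b ∨ b + 1 = a then 0 else 1

theorem bpInd_comm (a b : ℕ) : bpInd a b = bpInd b a := by
  simp only [bpInd, or_comm]

theorem bpInd_le_one (a b : ℕ) : bpInd a b ≤ 1 := by
  unfold bpInd; split <;> simp

theorem bpInd_of_adj {a b : ℕ} (h : a + 1 = b ∨ b + 1 = a) : bpInd a b = 0 :=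
  if_pos h

theorem bpInd_of_not_adj {a b : ℕ} (h : ¬(a + 1 = b ∨ b + 1 = a)) : bpInd a b = 1 :=
  if_neg h

theorem bp'_singleton (a : ℕ) : bp' [a] = 0 := rfl

theorem bp'_cons_cons (a b : ℕ) (l : List ℕ) :
    bp' (a :: b :: l) = bpInd a b + bp' (b :: l) := by
  by_cases h : a + 1 = b ∨ b + 1 = a
  · simpa [bp', bpInd, List.countP_cons, h] using h.resolve_left
  · simp [bp', bpInd, add_comm, not_or.mp h]

theorem bp'_append {l r : List ℕ} (hl : l ≠ []) (hr : r ≠ []) :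
    bp' (l ++ r) = bp' l + bpInd (l.getLast hl) (r.head hr) + bp' r := by
  induction l with
  | nil => exact absurd rfl hl
  | cons a t ih =>
    obtain ⟨b, r, rfl⟩ := List.exists_cons_of_ne_nil hr
    cases t with
    | nil => simp [bp'_cons_cons, bp'_singleton]
    | cons c t =>
      simp only [List.cons_append, bp'_cons_cons, List.getLast_cons_cons]
      rw [← List.cons_append, ih (List.cons_ne_nil c t)]
      simp only [List.head_cons]
      omega

theorem bp'_reverse (l : List ℕ) : bp' l.reverse = bp' l := by
  induction l with
  | nil => rfl
  | cons a t ih =>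
    cases t with
    | nil => rfl
    | cons b t =>
      rw [List.reverse_cons, bp'_append (by simp) (List.cons_ne_nil a []), ih, bp'_cons_cons,
        bp'_singleton, List.getLast_reverse, bpInd_comm]
      simp only [List.head_cons]
      omega

theorem bp_eq_one_add_bp'_drop_one (π : List ℕ) : bp π = 1 + bp' (π.drop 1) := by
  simp only [bp, bp', List.drop_drop]

theorem bp'_append_reverse_append {A B C : List ℕ} (hA : A ≠ []) (hB : B ≠ []) (hC : C ≠ []) :
    bp' (A ++ B.reverse ++ C) + bpInd (B.getLast hB) (A.head hA) +
        bpInd (A.getLast hA) (C.head hC) =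
      bp' (B ++ A ++ C) + bpInd (A.getLast hA) (B.getLast hB) +
        bpInd (B.head hB) (C.head hC) := by
  have hBr : B.reverse ≠ [] := List.reverse_ne_nil_iff.mpr hB
  rw [List.append_assoc, List.append_assoc, bp'_append hA (by simp [hB]),
    bp'_append hBr hC, bp'_append hB (by simp [hA]), bp'_append hA hC, bp'_reverse]
  simp only [List.head_append_of_ne_nil hBr, List.head_append_of_ne_nil hA, List.head_reverse,
    List.getLast_reverse]
  omega

section Endpoints

variable {α : Type*} (l : List α) (d : α) {m k : ℕ}

theorem head_drop_eq_getD (h : l.drop m ≠ []) : (l.drop m).head h = l.getD m d := by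
  rw [List.head_drop, List.getD_eq_getElem]

theorem head_take_drop_eq_getD (h : (l.drop m).take k ≠ []) :
    ((l.drop m).take k).head h = l.getD m d := by
  rw [List.head_take, head_drop_eq_getD]

theorem getLast_take_drop_eq_getD (h : (l.drop m).take k ≠ []) (hk : m + k ≤ l.length) :
    ((l.drop m).take k).getLast h = l.getD (m + k - 1) d := by
  have hk0 : k ≠ 0 := by rintro rfl; simp at h
  rw [List.getLast_eq_getElem, List.getElem_take, List.getElem_drop,
    List.getD_eq_getElem _ _ (by omega)]
  simp only [List.length_take, List.length_drop]
  congr 1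
  omega

end Endpoints

theorem drop_one_eq_segments (π : List ℕ) {i j : ℕ} (hi : 1 ≤ i) (hij : i ≤ j) :
    π.drop 1 = (π.drop 1).take (i - 1) ++ (π.drop i).take (j - i) ++ π.drop j := by
  have hAC : (π.drop i).take (j - i) ++ π.drop j = π.drop i := by
    conv_rhs => rw [← List.take_append_drop (j - i) (π.drop i), List.drop_drop,
      Nat.add_sub_cancel' hij]
  rw [List.append_assoc, hAC]
  conv_lhs => rw [← List.take_append_drop (i - 1) (π.drop 1), List.drop_drop,
    Nat.add_sub_cancel' hi]

theorem drop_one_prefixTransreversal {π : List ℕ} (hπ : π ≠ []) (i j : ℕ) :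
    (prefixTransreversal π i j).drop 1 =
      (π.drop i).take (j - i) ++ ((π.drop 1).take (i - 1)).reverse ++ π.drop j := by
  rw [prefixTransreversal, List.append_assoc, List.append_assoc, List.append_assoc,
    List.drop_left' (by simpa [Nat.one_le_iff_ne_zero] using hπ)]

theorem bp_prefixTransreversal_add (π : List ℕ) {i j : ℕ} (hi : 2 ≤ i) (hij : i < j)
    (hj : j < π.length) :
    bp (prefixTransreversal π i j) + bpInd (π.getD (i - 1) 0) (π.getD i 0) +
        bpInd (π.getD (j - 1) 0) (π.getD j 0) =
      bp π + bpInd (π.getD (j - 1) 0) (π.getD (i - 1) 0) +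
        bpInd (π.getD 1 0) (π.getD j 0) := by
  have hB : (π.drop 1).take (i - 1) ≠ [] := List.ne_nil_of_length_pos (by simp; omega)
  have hA : (π.drop i).take (j - i) ≠ [] := List.ne_nil_of_length_pos (by simp; omega)
  have hC : π.drop j ≠ [] := List.ne_nil_of_length_pos (by simp; omega)
  have key := bp'_append_reverse_append hA hB hC
  rw [head_take_drop_eq_getD _ 0, head_take_drop_eq_getD _ 0, head_drop_eq_getD _ 0,
    getLast_take_drop_eq_getD π 0 hB (by omega), getLast_take_drop_eq_getD π 0 hA (by omega),
    show 1 + (i - 1) - 1 = i - 1 by omega, show i + (j - i) - 1 = j - 1 by omega] at key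
  rw [bp_eq_one_add_bp'_drop_one, bp_eq_one_add_bp'_drop_one,
    drop_one_prefixTransreversal (List.ne_nil_of_length_pos (by omega))]
  conv_rhs => rw [drop_one_eq_segments π (by omega) hij.le]
  omega

theorem prefixTransreversal_removes_breakpoint_general
    (n : ℕ) (π : List ℕ) (hπ : IsPerm n π)
    (i j : ℕ)
    (hi : 2 ≤ i) (hij : i < j) (hj : j ≤ n + 1)
    (hgrey : π.getD (i - 1) 0 + 1 = π.getD (j - 1) 0 ∨
             π.getD (j - 1) 0 + 1 = π.getD (i - 1) 0)
    (hbi : ¬(π.getD (i - 1) 0 + 1 = π.getD i 0 ∨ π.getD i 0 + 1 = π.getD (i - 1) 0))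
    (hbj : ¬(π.getD (j - 1) 0 + 1 = π.getD j 0 ∨ π.getD j 0 + 1 = π.getD (j - 1) 0)) :
    bp (prefixTransreversal π i j) ≤ bp π - 1 := by
  have hlen : π.length = n + 2 := by simpa using hπ.1.length_eq
  have hcount := bp_prefixTransreversal_add π hi hij (by omega)
  rw [bpInd_of_not_adj hbi, bpInd_of_not_adj hbj, bpInd_of_adj hgrey.symm] at hcount
  have hlast := bpInd_le_one (π.getD 1 0) (π.getD j 0)
  omega

/-- if `π₁ = 1`, `|π_{i−1} − π_{j−1}| = 1` and there are
breakpoints at positions `i` and `j` (with `2 ≤ i < j ≤ n+1`), then the prefix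
transreversal `βτ(1,i,j)` removes at least one breakpoint. -/
theorem prefixTransreversal_removes_breakpoint
    (n : ℕ) (π : List ℕ) (hπ : IsPerm n π)
    (i j : ℕ) (h1 : π.getD 1 0 = 1)
    (hi : 2 ≤ i) (hij : i < j) (hj : j ≤ n + 1)
    (hgrey : π.getD (i - 1) 0 + 1 = π.getD (j - 1) 0 ∨
             π.getD (j - 1) 0 + 1 = π.getD (i - 1) 0)
    (hbi : ¬(π.getD (i - 1) 0 + 1 = π.getD i 0 ∨ π.getD i 0 + 1 = π.getD (i - 1) 0))
    (hbj : ¬(π.getD (j - 1) 0 + 1 = π.getD j 0 ∨ π.getD j 0 + 1 = π.getD (j - 1) 0)) :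
    bp (prefixTransreversal π i j) ≤ bp π - 1 :=
  prefixTransreversal_removes_breakpoint_general n π hπ i j hi hij hj hgrey hbi hbj
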